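/- arXiv:2304.08342 — 3 statements merged into one kernel-verified Lean document; each statement's English description precedes it below -/
import Mathlib

section
/- Let b_λ(x) = ∇ log p(y|x) + α ∇ log q_θ(x) + (Π_C(x) − x)/λ, where ∇ log q_θ is L-Lipschitz, ∇ log p(y|·) satisfies ⟨∇log p(y|x₂) − ∇log p(y|x₁), x₂ − x₁⟩ ≤ −m_y‖x₂ − x₁‖², and 2λ(αL − m_y) ≤ 1. Then for all x₁, x₂ ∈ ℝ^d, ⟨b_λ(x₁) − b_λ(x₂), x₁ − x₂⟩ ≤ −‖x₁ − x₂‖²/(2λ) + R_C‖x₁ − x₂‖/λ, where R_C = sup{‖u − v‖ : u, v ∈ C}. In particular, if ‖x₁ − x₂‖ ≥ 4R_C then ⟨b_λ(x₁) − b_λ(x₂), x₁ − x₂⟩ ≤ −‖x₁ − x₂‖²/(4λ). -/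
/-!
The drift splits into three terms: the likelihood term contributes `-m_y ‖x₁ - x₂‖²`,
the Lipschitz prior term at most `α L ‖x₁ - x₂‖²`, and the Moreau–Yosida term
`(Π_C x - x)/λ` contributes `-‖x₁ - x₂‖²/λ` plus `⟪Π_C x₁ - Π_C x₂, x₁ - x₂⟫/λ ≤ R_C ‖x₁ - x₂‖/λ`,
since both projections lie in `C`. The step-size condition `2λ(αL - m_y) ≤ 1` absorbs the first two
terms into half of `-‖x₁ - x₂‖²/λ`.
-/

open RealInnerProductSpace

section

variable {E : Type*} [NormedAddCommGroup E] [InnerProductSpace ℝ E]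

theorem inner_sub_sub_le_of_lipschitz {g : E → E} {L : ℝ}
    (hg : ∀ x y, ‖g x - g y‖ ≤ L * ‖x - y‖) (x y : E) :
    ⟪g x - g y, x - y⟫ ≤ L * ‖x - y‖ ^ 2 :=
  calc ⟪g x - g y, x - y⟫ ≤ ‖g x - g y‖ * ‖x - y‖ := real_inner_le_norm _ _
    _ ≤ L * ‖x - y‖ * ‖x - y‖ := mul_le_mul_of_nonneg_right (hg x y) (norm_nonneg _)
    _ = L * ‖x - y‖ ^ 2 := by ring

theorem inner_sub_sub_le_of_mem_bounded {C : Set E} {R : ℝ} (hR : ∀ u ∈ C, ∀ v ∈ C, ‖u - v‖ ≤ R)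
    {p : E → E} (hp : ∀ x, p x ∈ C) (x y : E) :
    ⟪p x - p y, x - y⟫ ≤ R * ‖x - y‖ :=
  calc ⟪p x - p y, x - y⟫ ≤ ‖p x - p y‖ * ‖x - y‖ := real_inner_le_norm _ _
    _ ≤ R * ‖x - y‖ := mul_le_mul_of_nonneg_right (hR _ (hp x) _ (hp y)) (norm_nonneg _)

theorem inner_drift_sub_drift_eq (f g p : E → E) (α lam : ℝ) (x₁ x₂ : E) :
    ⟪(f x₁ + α • g x₁ + (1 / lam) • (p x₁ - x₁)) - (f x₂ + α • g x₂ + (1 / lam) • (p x₂ - x₂)),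
      x₁ - x₂⟫ =
      ⟪f x₁ - f x₂, x₁ - x₂⟫ + α * ⟪g x₁ - g x₂, x₁ - x₂⟫
        + (⟪p x₁ - p x₂, x₁ - x₂⟫ - ‖x₁ - x₂‖ ^ 2) / lam := by
  have hsplit : (f x₁ + α • g x₁ + (1 / lam) • (p x₁ - x₁))
      - (f x₂ + α • g x₂ + (1 / lam) • (p x₂ - x₂))
      = (f x₁ - f x₂) + α • (g x₁ - g x₂) + (1 / lam) • ((p x₁ - p x₂) - (x₁ - x₂)) := by
    module
  rw [hsplit, inner_add_left, inner_add_left, real_inner_smul_left, real_inner_smul_left,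
    inner_sub_left (p x₁ - p x₂), real_inner_self_eq_norm_sq]
  ring

theorem inner_drift_sub_drift_le {f g p : E → E} {C : Set E} {L α lam my R : ℝ}
    (hα : 0 ≤ α) (hlam : 0 < lam)
    (hgLip : ∀ x y, ‖g x - g y‖ ≤ L * ‖x - y‖)
    (hf : ∀ x₁ x₂, ⟪f x₂ - f x₁, x₂ - x₁⟫ ≤ -my * ‖x₂ - x₁‖ ^ 2)
    (hcond : 2 * lam * (α * L - my) ≤ 1)
    (hR : ∀ u ∈ C, ∀ v ∈ C, ‖u - v‖ ≤ R) (hp : ∀ x, p x ∈ C) (x₁ x₂ : E) :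
    ⟪(f x₁ + α • g x₁ + (1 / lam) • (p x₁ - x₁)) - (f x₂ + α • g x₂ + (1 / lam) • (p x₂ - x₂)),
      x₁ - x₂⟫ ≤ -‖x₁ - x₂‖ ^ 2 / (2 * lam) + R * ‖x₁ - x₂‖ / lam := by
  set n := ‖x₁ - x₂‖
  have hlik := hf x₂ x₁
  have hprior := mul_le_mul_of_nonneg_left (inner_sub_sub_le_of_lipschitz hgLip x₁ x₂) hα
  have hproj := inner_sub_sub_le_of_mem_bounded hR hp x₁ x₂
  have habsorb : -my * n ^ 2 + α * (L * n ^ 2) ≤ n ^ 2 / (2 * lam) := by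
    rw [le_div_iff₀ (by positivity)]
    nlinarith [mul_le_mul_of_nonneg_right hcond (sq_nonneg n)]
  rw [inner_drift_sub_drift_eq]
  calc _ ≤ -my * n ^ 2 + α * (L * n ^ 2) + (R * n - n ^ 2) / lam := by gcongr
    _ ≤ n ^ 2 / (2 * lam) + (R * n - n ^ 2) / lam := by gcongr
    _ = -n ^ 2 / (2 * lam) + R * n / lam := by field_simp; ring

end

theorem drift_bound_of_four_mul_le {lam R n : ℝ} (hlam : 0 < lam) (hn : 0 ≤ n) (h : 4 * R ≤ n) :
    -n ^ 2 / (2 * lam) + R * n / lam ≤ -n ^ 2 / (4 * lam) := by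
  have hRn : R * n ≤ n ^ 2 / 4 := by nlinarith
  calc -n ^ 2 / (2 * lam) + R * n / lam ≤ -n ^ 2 / (2 * lam) + n ^ 2 / 4 / lam := by gcongr
    _ = -n ^ 2 / (4 * lam) := by field_simp; ring

theorem stmt7_general {d : ℕ} (f g : EuclideanSpace ℝ (Fin d) → EuclideanSpace ℝ (Fin d))
    (L α lam my RC : ℝ) (hα : 0 < α) (hlam : 0 < lam)
    (hgLip : ∀ x y, ‖g x - g y‖ ≤ L * ‖x - y‖)
    (hf : ∀ x₁ x₂, (inner ℝ (f x₂ - f x₁) (x₂ - x₁) : ℝ) ≤ -my * ‖x₂ - x₁‖ ^ 2)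
    (hcond : 2 * lam * (α * L - my) ≤ 1)
    (C : Set (EuclideanSpace ℝ (Fin d)))
    (hRC : ∀ u ∈ C, ∀ v ∈ C, ‖u - v‖ ≤ RC)
    (proj : EuclideanSpace ℝ (Fin d) → EuclideanSpace ℝ (Fin d))
    (hproj : ∀ x, proj x ∈ C ∧ ∀ z ∈ C, ‖x - proj x‖ ≤ ‖x - z‖)
    (b : EuclideanSpace ℝ (Fin d) → EuclideanSpace ℝ (Fin d))
    (hb : ∀ x, b x = f x + α • g x + (1 / lam) • (proj x - x)) :
    (∀ x₁ x₂, (inner ℝ (b x₁ - b x₂) (x₁ - x₂) : ℝ) ≤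
      -‖x₁ - x₂‖ ^ 2 / (2 * lam) + RC * ‖x₁ - x₂‖ / lam) ∧
    (∀ x₁ x₂, 4 * RC ≤ ‖x₁ - x₂‖ →
      (inner ℝ (b x₁ - b x₂) (x₁ - x₂) : ℝ) ≤ -‖x₁ - x₂‖ ^ 2 / (4 * lam)) := by
  have hdrift : ∀ x₁ x₂, (inner ℝ (b x₁ - b x₂) (x₁ - x₂) : ℝ) ≤
      -‖x₁ - x₂‖ ^ 2 / (2 * lam) + RC * ‖x₁ - x₂‖ / lam := fun x₁ x₂ => by
    rw [hb, hb]
    exact inner_drift_sub_drift_le hα.le hlam hgLip hf hcond hRC (fun x => (hproj x).1) x₁ x₂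
  exact ⟨hdrift, fun x₁ x₂ hfar =>
    (hdrift x₁ x₂).trans (drift_bound_of_four_mul_le hlam (norm_nonneg _) hfar)⟩

/-- one-sided contractivity of the NF-ULA drift
`b_λ(x) = ∇log p(y|x) + α ∇log q_θ(x) + (Π_C x - x)/λ`. -/
theorem stmt7 {d : ℕ} (f g : EuclideanSpace ℝ (Fin d) → EuclideanSpace ℝ (Fin d))
    (L α lam my RC : ℝ) (hL : 0 ≤ L) (hα : 0 < α) (hlam : 0 < lam)
    (hgLip : ∀ x y, ‖g x - g y‖ ≤ L * ‖x - y‖)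
    (hf : ∀ x₁ x₂, (inner ℝ (f x₂ - f x₁) (x₂ - x₁) : ℝ) ≤ -my * ‖x₂ - x₁‖ ^ 2)
    (hcond : 2 * lam * (α * L - my) ≤ 1)
    (C : Set (EuclideanSpace ℝ (Fin d)))
    (hconv : Convex ℝ C) (hcomp : IsCompact C) (hne : C.Nonempty)
    (hRC : ∀ u ∈ C, ∀ v ∈ C, ‖u - v‖ ≤ RC) (hRC0 : 0 ≤ RC)
    (proj : EuclideanSpace ℝ (Fin d) → EuclideanSpace ℝ (Fin d))
    (hproj : ∀ x, proj x ∈ C ∧ ∀ z ∈ C, ‖x - proj x‖ ≤ ‖x - z‖)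
    (b : EuclideanSpace ℝ (Fin d) → EuclideanSpace ℝ (Fin d))
    (hb : ∀ x, b x = f x + α • g x + (1 / lam) • (proj x - x)) :
    (∀ x₁ x₂, (inner ℝ (b x₁ - b x₂) (x₁ - x₂) : ℝ) ≤
      -‖x₁ - x₂‖ ^ 2 / (2 * lam) + RC * ‖x₁ - x₂‖ / lam) ∧
    (∀ x₁ x₂, 4 * RC ≤ ‖x₁ - x₂‖ →
      (inner ℝ (b x₁ - b x₂) (x₁ - x₂) : ℝ) ≤ -‖x₁ - x₂‖ ^ 2 / (4 * lam)) :=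
  stmt7_general f g L α lam my RC hα hlam hgLip hf hcond C hRC proj hproj b hb
end

section
/- Let μ, ν be probability measures on ℝ^d and V : ℝ^d → [1, ∞) measurable. Then the V-norm of μ − ν satisfies ‖μ − ν‖_V ≤ ‖μ − ν‖_{TV}^{1/2} · (μ[V²] + ν[V²])^{1/2}, where ‖ξ‖_V = sup_{‖f‖_V ≤ 1} |∫ f dξ| and ‖f‖_V = sup_x |f(x)|/V(x). -/
/-!
Write `h` for the density of `μ - ν` with respect to `ρ = μ + ν`, so that `|h| ≤ 1`,
`∫ f dμ - ∫ f dν = ∫ f h dρ` and `∫ |h| dρ` is attained by the test function `sign h`, hence is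
bounded by the total variation. For `|f| ≤ V`, Cauchy–Schwarz with respect to the measure `|h| ρ`
gives `|∫ f h dρ| ≤ (∫ f² |h| dρ)^{1/2} (∫ |h| dρ)^{1/2} ≤ (μ[V²] + ν[V²])^{1/2} ‖μ - ν‖_TV^{1/2}`.
-/

open MeasureTheory Real

variable {α : Type*} [MeasurableSpace α]

lemma integral_abs_mul_le_sqrt_mul_sqrt {ρ : Measure α} {f w : α → ℝ}
    (hf : AEStronglyMeasurable f ρ) (hw₀ : 0 ≤ᵐ[ρ] w) (hw : Integrable w ρ)
    (hfw : Integrable (fun x => f x ^ 2 * w x) ρ) :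
    ∫ x, |f x| * w x ∂ρ ≤ √(∫ x, f x ^ 2 * w x ∂ρ) * √(∫ x, w x ∂ρ) := by
  have hsq₁ : (fun x => (|f x| * √(w x)) ^ 2) =ᵐ[ρ] fun x => f x ^ 2 * w x := by
    filter_upwards [hw₀] with x hx
    rw [mul_pow, sq_abs, sq_sqrt hx]
  have hsq₂ : (fun x => √(w x) ^ 2) =ᵐ[ρ] w := by
    filter_upwards [hw₀] with x hx using sq_sqrt hx
  have hsqrt_w : AEStronglyMeasurable (fun x => √(w x)) ρ :=
    continuous_sqrt.comp_aestronglyMeasurable hw.1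
  have hmem₁ : MemLp (fun x => |f x| * √(w x)) 2 ρ :=
    (memLp_two_iff_integrable_sq (hf.norm.mul hsqrt_w)).2 (hfw.congr hsq₁.symm)
  have hmem₂ : MemLp (fun x => √(w x)) 2 ρ :=
    (memLp_two_iff_integrable_sq hsqrt_w).2 (hw.congr hsq₂.symm)
  have holder := integral_mul_le_Lp_mul_Lq_of_nonneg HolderConjugate.two_two
    (f := fun x => |f x| * √(w x)) (g := fun x => √(w x))
    (ae_of_all _ fun x => by positivity) (ae_of_all _ fun x => sqrt_nonneg _)
    (by rwa [ENNReal.ofReal_ofNat]) (by rwa [ENNReal.ofReal_ofNat])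
  simp only [rpow_two, ← sqrt_eq_rpow] at holder
  calc ∫ x, |f x| * w x ∂ρ = ∫ x, |f x| * √(w x) * √(w x) ∂ρ := by
        refine integral_congr_ae ?_
        filter_upwards [hw₀] with x hx
        rw [mul_assoc, mul_self_sqrt hx]
    _ ≤ _ := holder
    _ = _ := by rw [integral_congr_ae hsq₁, integral_congr_ae hsq₂]

lemma integrable_of_abs_le_of_integrable_sq {μ : Measure α} [IsFiniteMeasure μ] {f V : α → ℝ}
    (hf : AEStronglyMeasurable f μ) (hfV : ∀ x, |f x| ≤ V x)
    (hV : Integrable (fun x => V x ^ 2) μ) : Integrable f μ := by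
  have hf_sq : Integrable (fun x => f x ^ 2) μ :=
    hV.mono' (hf.pow 2) (ae_of_all _ fun x => by
      rw [norm_pow, norm_eq_abs]
      exact pow_le_pow_left₀ (abs_nonneg _) (hfV x) 2)
  exact ((memLp_two_iff_integrable_sq hf).2 hf_sq).integrable one_le_two

/-- `weightedDist V μ ν` is `‖μ - ν‖_V`; with `V = 1` it is `‖μ - ν‖_TV`. -/
noncomputable def weightedDist (V : α → ℝ) (μ ν : Measure α) : ℝ :=
  ⨆ f : {f : α → ℝ // Measurable f ∧ ∀ x, |f x| ≤ V x}, |∫ x, f.1 x ∂μ - ∫ x, f.1 x ∂ν|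

noncomputable def signedDensity (μ ν : Measure α) (x : α) : ℝ :=
  (μ.rnDeriv (μ + ν) x).toReal - (ν.rnDeriv (μ + ν) x).toReal

lemma measurable_signedDensity (μ ν : Measure α) : Measurable (signedDensity μ ν) :=
  (μ.measurable_rnDeriv _).ennreal_toReal.sub (ν.measurable_rnDeriv _).ennreal_toReal

section FiniteMeasures

variable (μ ν : Measure α) [IsFiniteMeasure μ] [IsFiniteMeasure ν]

lemma integrable_signedDensity : Integrable (signedDensity μ ν) (μ + ν) :=
  Measure.integrable_toReal_rnDeriv.sub Measure.integrable_toReal_rnDeriv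

lemma ae_abs_signedDensity_le_one : ∀ᵐ x ∂(μ + ν), |signedDensity μ ν x| ≤ 1 := by
  filter_upwards [Measure.rnDeriv_le_one_of_le (Measure.le_add_right le_rfl : μ ≤ μ + ν),
    Measure.rnDeriv_le_one_of_le (Measure.le_add_left le_rfl : ν ≤ μ + ν)] with x hμ hν
  exact abs_sub_le_of_nonneg_of_le ENNReal.toReal_nonneg
    (ENNReal.toReal_le_of_le_ofReal zero_le_one (by simpa using hμ)) ENNReal.toReal_nonneg
    (ENNReal.toReal_le_of_le_ofReal zero_le_one (by simpa using hν))

lemma integral_sub_eq_integral_mul_signedDensity {f : α → ℝ} (hμ : Integrable f μ)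
    (hν : Integrable f ν) :
    ∫ x, f x ∂μ - ∫ x, f x ∂ν = ∫ x, f x * signedDensity μ ν x ∂(μ + ν) := by
  have hμρ : μ ≪ μ + ν := Measure.absolutelyContinuous_of_le (Measure.le_add_right le_rfl)
  have hνρ : ν ≪ μ + ν := Measure.absolutelyContinuous_of_le (Measure.le_add_left le_rfl)
  rw [← integral_toReal_rnDeriv_mul hμρ, ← integral_toReal_rnDeriv_mul hνρ,
    ← integral_sub ((integrable_toReal_rnDeriv_mul_iff hμρ).2 hμ)
      ((integrable_toReal_rnDeriv_mul_iff hνρ).2 hν)]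
  congr 1 with x
  rw [signedDensity]
  ring

lemma bddAbove_range_abs_integral_sub :
    BddAbove (Set.range fun f : {f : α → ℝ // Measurable f ∧ ∀ x, |f x| ≤ 1} =>
      |∫ x, f.1 x ∂μ - ∫ x, f.1 x ∂ν|) := by
  refine ⟨μ.real Set.univ + ν.real Set.univ, ?_⟩
  rintro _ ⟨f, rfl⟩
  have hbound : ∀ (m : Measure α) [IsFiniteMeasure m], |∫ x, f.1 x ∂m| ≤ m.real Set.univ :=
    fun m _ => by
      simpa using norm_integral_le_of_norm_le_const (μ := m)
        (ae_of_all _ fun x => (norm_eq_abs _).trans_le (f.2.2 x))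
  exact (abs_sub _ _).trans (add_le_add (hbound μ) (hbound ν))

lemma integral_abs_signedDensity_le_weightedDist :
    ∫ x, |signedDensity μ ν x| ∂(μ + ν) ≤ weightedDist (fun _ => 1) μ ν := by
  set h := signedDensity μ ν
  let s : α → ℝ := fun x => if 0 ≤ h x then 1 else -1
  have hs : Measurable s :=
    Measurable.ite (measurableSet_le measurable_const (measurable_signedDensity μ ν))
      measurable_const measurable_const
  have hs_le : ∀ x, |s x| ≤ 1 := fun x => by
    dsimp only [s]
    split_ifs <;> simp
  have hs_mul : ∀ x, s x * h x = |h x| := fun x => by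
    dsimp only [s]
    split_ifs with hx
    · rw [one_mul, abs_of_nonneg hx]
    · rw [neg_one_mul, abs_of_neg (not_le.1 hx)]
  have hs_int : ∀ (m : Measure α) [IsFiniteMeasure m], Integrable s m :=
    fun m _ => Integrable.of_bound hs.aestronglyMeasurable 1 (ae_of_all _ hs_le)
  calc ∫ x, |h x| ∂(μ + ν) = ∫ x, s x ∂μ - ∫ x, s x ∂ν := by
        rw [integral_sub_eq_integral_mul_signedDensity μ ν (hs_int μ) (hs_int ν)]
        exact (integral_congr_ae (ae_of_all _ hs_mul)).symm
    _ ≤ |∫ x, s x ∂μ - ∫ x, s x ∂ν| := le_abs_self _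
    _ ≤ _ := le_ciSup (bddAbove_range_abs_integral_sub μ ν) ⟨s, hs, hs_le⟩

lemma abs_integral_sub_le_sqrt_mul_sqrt {V f : α → ℝ} (hf : Measurable f)
    (hfV : ∀ x, |f x| ≤ V x) (hVμ : Integrable (fun x => V x ^ 2) μ)
    (hVν : Integrable (fun x => V x ^ 2) ν) :
    |∫ x, f x ∂μ - ∫ x, f x ∂ν| ≤
      √(∫ x, V x ^ 2 ∂(μ + ν)) * √(∫ x, |signedDensity μ ν x| ∂(μ + ν)) := by
  set h := signedDensity μ ν
  have hV : Integrable (fun x => V x ^ 2) (μ + ν) := hVμ.add_measure hVν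
  have hfh_le : ∀ᵐ x ∂(μ + ν), f x ^ 2 * |h x| ≤ V x ^ 2 := by
    filter_upwards [ae_abs_signedDensity_le_one μ ν] with x hx
    have hf_sq : f x ^ 2 ≤ V x ^ 2 := sq_abs (f x) ▸ pow_le_pow_left₀ (abs_nonneg _) (hfV x) 2
    nlinarith [sq_nonneg (f x), abs_nonneg (h x)]
  have hfh : Integrable (fun x => f x ^ 2 * |h x|) (μ + ν) :=
    hV.mono' ((hf.pow_const 2).mul (measurable_signedDensity μ ν).abs).aestronglyMeasurable
      (by filter_upwards [hfh_le] with x hx; rwa [norm_of_nonneg (by positivity)])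
  rw [integral_sub_eq_integral_mul_signedDensity μ ν
    (integrable_of_abs_le_of_integrable_sq hf.aestronglyMeasurable hfV hVμ)
    (integrable_of_abs_le_of_integrable_sq hf.aestronglyMeasurable hfV hVν)]
  calc |∫ x, f x * h x ∂(μ + ν)| ≤ ∫ x, |f x| * |h x| ∂(μ + ν) := by
        simpa only [norm_eq_abs, abs_mul] using norm_integral_le_integral_norm (fun x => f x * h x)
    _ ≤ √(∫ x, f x ^ 2 * |h x| ∂(μ + ν)) * √(∫ x, |h x| ∂(μ + ν)) :=
        integral_abs_mul_le_sqrt_mul_sqrt hf.aestronglyMeasurable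
          (ae_of_all _ fun x => abs_nonneg _) (integrable_signedDensity μ ν).abs hfh
    _ ≤ _ := mul_le_mul_of_nonneg_right (sqrt_le_sqrt (integral_mono_ae hfh hV hfh_le))
        (sqrt_nonneg _)

theorem weightedDist_le_sqrt_mul_sqrt {V : α → ℝ} (hVμ : Integrable (fun x => V x ^ 2) μ)
    (hVν : Integrable (fun x => V x ^ 2) ν) :
    weightedDist V μ ν ≤
      √(weightedDist (fun _ => 1) μ ν) * √(∫ x, V x ^ 2 ∂μ + ∫ x, V x ^ 2 ∂ν) := by
  rw [← integral_add_measure hVμ hVν, mul_comm]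
  refine Real.iSup_le (fun f => ?_) (by positivity)
  calc _ ≤ _ := abs_integral_sub_le_sqrt_mul_sqrt μ ν f.2.1 f.2.2 hVμ hVν
    _ ≤ _ := by
        gcongr
        exact integral_abs_signedDensity_le_weightedDist μ ν

end FiniteMeasures

theorem stmt9_general {d : ℕ} (μ ν : Measure (EuclideanSpace ℝ (Fin d)))
    [IsProbabilityMeasure μ] [IsProbabilityMeasure ν]
    (V : EuclideanSpace ℝ (Fin d) → ℝ)
    (hV2μ : Integrable (fun x => V x ^ 2) μ) (hV2ν : Integrable (fun x => V x ^ 2) ν) :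
    (⨆ f : {f : EuclideanSpace ℝ (Fin d) → ℝ // Measurable f ∧ ∀ x, |f x| ≤ V x},
        |∫ x, f.1 x ∂μ - ∫ x, f.1 x ∂ν|) ≤
      Real.sqrt (⨆ f : {f : EuclideanSpace ℝ (Fin d) → ℝ // Measurable f ∧ ∀ x, |f x| ≤ 1},
          |∫ x, f.1 x ∂μ - ∫ x, f.1 x ∂ν|) *
        Real.sqrt ((∫ x, V x ^ 2 ∂μ) + ∫ x, V x ^ 2 ∂ν) :=
  weightedDist_le_sqrt_mul_sqrt μ ν hV2μ hV2ν

/-- `‖μ - ν‖_V ≤ ‖μ - ν‖_TV^{1/2} (μ[V²] + ν[V²])^{1/2}`, with the `V`-norm and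
the TV norm expressed as suprema over measurable test functions dominated by `V`
(respectively by `1`). -/
theorem stmt9 {d : ℕ} (μ ν : Measure (EuclideanSpace ℝ (Fin d)))
    [IsProbabilityMeasure μ] [IsProbabilityMeasure ν]
    (V : EuclideanSpace ℝ (Fin d) → ℝ) (hVmeas : Measurable V) (hV1 : ∀ x, 1 ≤ V x)
    (hV2μ : Integrable (fun x => V x ^ 2) μ) (hV2ν : Integrable (fun x => V x ^ 2) ν) :
    (⨆ f : {f : EuclideanSpace ℝ (Fin d) → ℝ // Measurable f ∧ ∀ x, |f x| ≤ V x},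
        |∫ x, f.1 x ∂μ - ∫ x, f.1 x ∂ν|) ≤
      Real.sqrt (⨆ f : {f : EuclideanSpace ℝ (Fin d) → ℝ // Measurable f ∧ ∀ x, |f x| ≤ 1},
          |∫ x, f.1 x ∂μ - ∫ x, f.1 x ∂ν|) *
        Real.sqrt ((∫ x, V x ^ 2 ∂μ) + ∫ x, V x ^ 2 ∂ν) :=
  stmt9_general μ ν V hV2μ hV2ν
end

section
/- Suppose there exist continuous Φ₁ : ℝ^d → [0,∞) and Φ₂ : ℝ^m → [0,∞) with |log p(y₁|x) − log p(y₂|x)| ≤ (Φ₁(x) + Φ₂(y₁) + Φ₂(y₂))‖y₁ − y₂‖ for all x, y₁, y₂, and that ∫(1 + Φ₁(x)) exp[c₀Φ₁(x) − ι_C^{(λ)}(x)] q_θ(x)^α dx < ∞ for all c₀ > 0, with q_θ bounded and p(y|·) bounded and positive. Then the map y ↦ π_{λ,y}, where π_{λ,y} has density proportional to p(y|x) q_θ(x)^α exp(−ι_C^{(λ)}(x)), is locally Lipschitz in total variation: for every compact K ⊂ ℝ^m there is M_K ≥ 0 with ‖π_{λ,y₁} − π_{λ,y₂}‖_{TV}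 ≤ M_K‖y₁ − y₂‖ for all y₁, y₂ ∈ K. -/
/-!
Write the unnormalised posterior density as `g_y = p(y|·) w` with `w = q^α e^{-ι_C^{(λ)}}`.
On a compact `K` we have `Φ₂ ≤ B` and `diam K ≤ D` with `D > 0`, so with `φ = Φ₁ + 2B` the
log-Lipschitz hypothesis gives, for a fixed `y₀ ∈ K`, the pointwise bounds
`g_{y₀} e^{-φD} ≤ g_y ≤ g_{y₀} e^{φD}` and
`|g_{y₁} - g_{y₂}| ≤ max(g_{y₁}, g_{y₂}) |log g_{y₁} - log g_{y₂}| ≤ g_{y₀} φ e^{φD} ‖y₁ - y₂‖`.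
The integrability hypothesis with `c₀ = D` makes the upper bounds integrable, the lower bound
keeps the normalising constants away from `0` uniformly on `K`, and normalising costs at most a
factor `2 / Z`: `‖g₁/Z₁ - g₂/Z₂‖₁ ≤ 2 ‖g₁ - g₂‖₁ / Z₁`.
-/

open MeasureTheory Real

lemma abs_sub_le_max_mul_abs_log_sub {a b : ℝ} (ha : 0 < a) (hb : 0 < b) :
    |a - b| ≤ max a b * |log a - log b| := by
  wlog hba : b ≤ a generalizing a b
  · simpa only [abs_sub_comm, max_comm] using this hb ha (le_of_not_ge hba)
  rw [max_eq_left hba, abs_of_nonneg (sub_nonneg.2 hba),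
    abs_of_nonneg (sub_nonneg.2 (log_le_log hb hba))]
  have h := log_le_sub_one_of_pos (div_pos hb ha)
  rw [log_div hb.ne' ha.ne', le_sub_iff_add_le, le_div_iff₀ ha] at h
  linarith

lemma le_mul_exp_of_abs_log_sub_le {a b s : ℝ} (ha : 0 < a) (hb : 0 < b)
    (h : |log a - log b| ≤ s) : a ≤ b * exp s := by
  rw [← log_le_log_iff ha (by positivity), log_mul hb.ne' (exp_pos s).ne', log_exp]
  linarith [le_abs_self (log a - log b)]

section Normalization

variable {X : Type*} [MeasurableSpace X] {μ : Measure X} {f g : X → ℝ}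

theorem integral_abs_div_integral_sub_le (hf : Integrable f μ) (hg : Integrable g μ)
    (hg0 : 0 ≤ᵐ[μ] g) (hZf : 0 < ∫ x, f x ∂μ) (hZg : 0 < ∫ x, g x ∂μ) :
    ∫ x, |f x / ∫ x, f x ∂μ - g x / ∫ x, g x ∂μ| ∂μ ≤
      2 * (∫ x, |f x - g x| ∂μ) / ∫ x, f x ∂μ := by
  set Zf := ∫ x, f x ∂μ
  set Zg := ∫ x, g x ∂μ with hZg_def
  have hZ : |Zf - Zg| ≤ ∫ x, |f x - g x| ∂μ := by
    rw [← integral_sub hf hg]; exact abs_integral_le_integral_abs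
  have hpt : ∀ᵐ x ∂μ,
      |f x / Zf - g x / Zg| ≤ |f x - g x| / Zf + g x * (|Zf - Zg| / (Zf * Zg)) := by
    filter_upwards [hg0] with x hx
    have : f x / Zf - g x / Zg = (f x - g x) / Zf + g x * ((Zg - Zf) / (Zf * Zg)) := by
      field_simp; ring
    rw [this]
    refine (abs_add_le _ _).trans_eq ?_
    rw [abs_div, abs_of_pos hZf, abs_mul, abs_of_nonneg hx, abs_div,
      abs_of_pos (mul_pos hZf hZg), abs_sub_comm Zg]
  have hi1 : Integrable (fun x => |f x - g x| / Zf) μ := (hf.sub hg).abs.div_const Zf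
  have hi2 : Integrable (fun x => g x * (|Zf - Zg| / (Zf * Zg))) μ := hg.mul_const _
  calc ∫ x, |f x / Zf - g x / Zg| ∂μ
      ≤ ∫ x, (|f x - g x| / Zf + g x * (|Zf - Zg| / (Zf * Zg))) ∂μ :=
        integral_mono_of_nonneg (ae_of_all _ fun _ => abs_nonneg _) (hi1.add hi2) hpt
    _ = ((∫ x, |f x - g x| ∂μ) + |Zf - Zg|) / Zf := by
        rw [integral_add hi1 hi2, integral_div, integral_mul_const, ← hZg_def]
        field_simp
    _ ≤ 2 * (∫ x, |f x - g x| ∂μ) / Zf := by gcongr; linarith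

lemma integral_pos_of_pos [NeZero μ] (hf : Integrable f μ) (hpos : ∀ x, 0 < f x) :
    0 < ∫ x, f x ∂μ := by
  rw [integral_pos_iff_support_of_nonneg (fun x => (hpos x).le) hf,
    Function.support_eq_univ fun x => (hpos x).ne']
  exact Measure.measure_univ_pos.2 (NeZero.ne μ)

lemma integral_abs_div_integral_sub_le_of_abs_sub_le {f₁ f₂ ℓ F : X → ℝ} {δ : ℝ}
    (hf₁ : Integrable f₁ μ) (hf₂ : Integrable f₂ μ) (hf₂₀ : 0 ≤ f₂) (hℓ : Integrable ℓ μ)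
    (hℓ_pos : 0 < ∫ x, ℓ x ∂μ) (hℓf₁ : ℓ ≤ f₁) (hℓf₂ : ℓ ≤ f₂) (hF : Integrable F μ)
    (hfF : ∀ x, |f₁ x - f₂ x| ≤ δ * F x) :
    ∫ x, |f₁ x / ∫ x', f₁ x' ∂μ - f₂ x / ∫ x', f₂ x' ∂μ| ∂μ ≤
      2 * (∫ x, F x ∂μ) / (∫ x, ℓ x ∂μ) * δ := by
  have hZ₁ : ∫ x, ℓ x ∂μ ≤ ∫ x, f₁ x ∂μ := integral_mono hℓ hf₁ hℓf₁
  have hL1 : ∫ x, |f₁ x - f₂ x| ∂μ ≤ δ * ∫ x, F x ∂μ := by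
    rw [← integral_const_mul]
    exact integral_mono_of_nonneg (ae_of_all _ fun _ => abs_nonneg _) (hF.const_mul δ)
      (ae_of_all _ hfF)
  have hL1_nonneg : 0 ≤ ∫ x, |f₁ x - f₂ x| ∂μ := integral_nonneg fun _ => abs_nonneg _
  calc ∫ x, |f₁ x / ∫ x', f₁ x' ∂μ - f₂ x / ∫ x', f₂ x' ∂μ| ∂μ
      ≤ 2 * (∫ x, |f₁ x - f₂ x| ∂μ) / ∫ x, f₁ x ∂μ :=
        integral_abs_div_integral_sub_le hf₁ hf₂ (ae_of_all _ hf₂₀) (hℓ_pos.trans_le hZ₁)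
          (hℓ_pos.trans_le (integral_mono hℓ hf₂ hℓf₂))
    _ ≤ 2 * (δ * ∫ x, F x ∂μ) / ∫ x, ℓ x ∂μ :=
        div_le_div₀ (by linarith) (by linarith) hℓ_pos hZ₁
    _ = 2 * (∫ x, F x ∂μ) / (∫ x, ℓ x ∂μ) * δ := by ring

end Normalization

section LogLipschitzFamily

variable {X Y : Type*} [PseudoMetricSpace Y] {g : Y → X → ℝ} {φ : X → ℝ} {K : Set Y} {D : ℝ}
  {y₀ y₁ y₂ : Y}

lemma le_mul_exp_of_abs_log_sub_le_mul_dist (hg : ∀ y ∈ K, ∀ x, 0 < g y x) (hφ : ∀ x, 0 ≤ φ x)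
    (hlog : ∀ y₁ ∈ K, ∀ y₂ ∈ K, ∀ x, |log (g y₁ x) - log (g y₂ x)| ≤ φ x * dist y₁ y₂)
    (hD : ∀ y₁ ∈ K, ∀ y₂ ∈ K, dist y₁ y₂ ≤ D) (h₁ : y₁ ∈ K) (h₂ : y₂ ∈ K) (x : X) :
    g y₁ x ≤ g y₂ x * exp (φ x * D) :=
  le_mul_exp_of_abs_log_sub_le (hg y₁ h₁ x) (hg y₂ h₂ x)
    ((hlog y₁ h₁ y₂ h₂ x).trans (mul_le_mul_of_nonneg_left (hD y₁ h₁ y₂ h₂) (hφ x)))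

lemma abs_sub_le_dist_mul_of_abs_log_sub_le_mul_dist (hg : ∀ y ∈ K, ∀ x, 0 < g y x)
    (hφ : ∀ x, 0 ≤ φ x)
    (hlog : ∀ y₁ ∈ K, ∀ y₂ ∈ K, ∀ x, |log (g y₁ x) - log (g y₂ x)| ≤ φ x * dist y₁ y₂)
    (hD : ∀ y₁ ∈ K, ∀ y₂ ∈ K, dist y₁ y₂ ≤ D) (h₀ : y₀ ∈ K) (h₁ : y₁ ∈ K) (h₂ : y₂ ∈ K)
    (x : X) : |g y₁ x - g y₂ x| ≤ dist y₁ y₂ * (g y₀ x * exp (φ x * D) * φ x) := by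
  have hmax : max (g y₁ x) (g y₂ x) ≤ g y₀ x * exp (φ x * D) :=
    max_le (le_mul_exp_of_abs_log_sub_le_mul_dist hg hφ hlog hD h₁ h₀ x)
      (le_mul_exp_of_abs_log_sub_le_mul_dist hg hφ hlog hD h₂ h₀ x)
  calc |g y₁ x - g y₂ x| ≤ max (g y₁ x) (g y₂ x) * |log (g y₁ x) - log (g y₂ x)| :=
        abs_sub_le_max_mul_abs_log_sub (hg y₁ h₁ x) (hg y₂ h₂ x)
    _ ≤ g y₀ x * exp (φ x * D) * (φ x * dist y₁ y₂) :=
        mul_le_mul hmax (hlog y₁ h₁ y₂ h₂ x) (abs_nonneg _) ((hg y₀ h₀ x).le.trans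
          (le_mul_exp_of_abs_log_sub_le_mul_dist hg hφ hlog hD h₀ h₀ x))
    _ = dist y₁ y₂ * (g y₀ x * exp (φ x * D) * φ x) := by ring

variable [MeasurableSpace X] {μ : Measure X}

theorem exists_integral_abs_div_integral_sub_le_mul_dist [NeZero μ] (hy₀ : y₀ ∈ K)
    (hg : ∀ y ∈ K, ∀ x, 0 < g y x) (hφ : ∀ x, 0 ≤ φ x)
    (hlog : ∀ y₁ ∈ K, ∀ y₂ ∈ K, ∀ x, |log (g y₁ x) - log (g y₂ x)| ≤ φ x * dist y₁ y₂)
    (hD : ∀ y₁ ∈ K, ∀ y₂ ∈ K, dist y₁ y₂ ≤ D)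
    (hg_meas : ∀ y ∈ K, AEStronglyMeasurable (g y) μ) (hφ_meas : AEStronglyMeasurable φ μ)
    (hint : Integrable (fun x => g y₀ x * exp (φ x * D) * (1 + φ x)) μ) :
    ∃ M, 0 ≤ M ∧ ∀ y₁ ∈ K, ∀ y₂ ∈ K,
      ∫ x, |g y₁ x / ∫ x', g y₁ x' ∂μ - g y₂ x / ∫ x', g y₂ x' ∂μ| ∂μ ≤ M * dist y₁ y₂ := by
  have hD₀ : 0 ≤ D := dist_nonneg.trans (hD y₀ hy₀ y₀ hy₀)
  set G := fun x => g y₀ x * exp (φ x * D)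
  have hG_nonneg : ∀ x, 0 ≤ G x := fun x => mul_nonneg (hg y₀ hy₀ x).le (exp_pos _).le
  have hG_meas : AEStronglyMeasurable G μ :=
    (hg_meas y₀ hy₀).mul (continuous_exp.comp_aestronglyMeasurable (hφ_meas.mul_const D))
  have hG_int : Integrable G μ := hint.mono' hG_meas (ae_of_all _ fun x => by
    rw [norm_of_nonneg (hG_nonneg x)]
    exact le_mul_of_one_le_right (hG_nonneg x) (by linarith [hφ x]))
  have hF_int : Integrable (fun x => G x * φ x) μ := hint.mono' (hG_meas.mul hφ_meas)
    (ae_of_all _ fun x => by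
      rw [norm_of_nonneg (mul_nonneg (hG_nonneg x) (hφ x))]
      exact mul_le_mul_of_nonneg_left (by linarith) (hG_nonneg x))
  have hg_int : ∀ y ∈ K, Integrable (g y) μ := fun y hy => hG_int.mono' (hg_meas y hy)
    (ae_of_all _ fun x => by
      rw [norm_of_nonneg (hg y hy x).le]
      exact le_mul_exp_of_abs_log_sub_le_mul_dist hg hφ hlog hD hy hy₀ x)
  set ℓ := fun x => g y₀ x * exp (-(φ x * D))
  have hℓ_pos : ∀ x, 0 < ℓ x := fun x => mul_pos (hg y₀ hy₀ x) (exp_pos _)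
  have hℓ_int : Integrable ℓ μ := (hg_int y₀ hy₀).mono'
    ((hg_meas y₀ hy₀).mul (continuous_exp.comp_aestronglyMeasurable (hφ_meas.mul_const D).neg))
    (ae_of_all _ fun x => by
      rw [norm_of_nonneg (hℓ_pos x).le]
      exact mul_le_of_le_one_right (hg y₀ hy₀ x).le
        (exp_le_one_iff.2 (neg_nonpos.2 (mul_nonneg (hφ x) hD₀))))
  have hℓ_le : ∀ y ∈ K, ℓ ≤ g y := fun y hy x => by
    change g y₀ x * exp (-(φ x * D)) ≤ g y x
    rw [exp_neg, ← div_eq_mul_inv, div_le_iff₀ (exp_pos _)]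
    exact le_mul_exp_of_abs_log_sub_le_mul_dist hg hφ hlog hD hy₀ hy x
  have hF_nonneg : 0 ≤ ∫ x, G x * φ x ∂μ :=
    integral_nonneg fun x => mul_nonneg (hG_nonneg x) (hφ x)
  have hZ_pos := integral_pos_of_pos hℓ_int hℓ_pos
  exact ⟨2 * (∫ x, G x * φ x ∂μ) / ∫ x, ℓ x ∂μ, by positivity, fun y₁ h₁ y₂ h₂ =>
    integral_abs_div_integral_sub_le_of_abs_sub_le (hg_int y₁ h₁) (hg_int y₂ h₂)
      (fun x => (hg y₂ h₂ x).le) hℓ_int hZ_pos (hℓ_le y₁ h₁) (hℓ_le y₂ h₂) hF_int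
      (abs_sub_le_dist_mul_of_abs_log_sub_le_mul_dist hg hφ hlog hD hy₀ h₁ h₂)⟩

end LogLipschitzFamily

section RegularizedPrior

variable {E : Type*} [NormedAddCommGroup E] {q Φ : E → ℝ} {α lam c b : ℝ} {proj : E → E}

/-- The factor `q_θ^α e^{-ι_C^{(λ)}}` of the posterior density. -/
noncomputable def regularizedPrior (q : E → ℝ) (α lam : ℝ) (proj : E → E) (x : E) : ℝ :=
  q x ^ α * exp (-‖x - proj x‖ ^ 2 / (2 * lam))

lemma regularizedPrior_pos (hq : ∀ x, 0 < q x) (x : E) : 0 < regularizedPrior q α lam proj x :=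
  mul_pos (rpow_pos_of_pos (hq x) α) (exp_pos _)

lemma exp_sub_mul_rpow_eq_exp_mul_regularizedPrior (x : E) :
    exp (c * Φ x - ‖x - proj x‖ ^ 2 / (2 * lam)) * q x ^ α =
      exp (c * Φ x) * regularizedPrior q α lam proj x := by
  rw [regularizedPrior, sub_eq_add_neg, ← neg_div, exp_add]
  ring

variable [MeasurableSpace E] [OpensMeasurableSpace E] {μ : Measure E}

lemma aestronglyMeasurable_regularizedPrior (hΦ : Continuous Φ) (hΦ₀ : ∀ x, 0 ≤ Φ x)
    (hint : Integrable (fun x => (1 + Φ x) * exp (c * Φ x - ‖x - proj x‖ ^ 2 / (2 * lam)) *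
      q x ^ α) μ) :
    AEStronglyMeasurable (regularizedPrior q α lam proj) μ := by
  have hcont : Continuous fun x => (1 + Φ x) * exp (c * Φ x) := by fun_prop
  refine (aestronglyMeasurable_smul_iff₀ hcont.aestronglyMeasurable (ae_of_all _ fun x =>
    (mul_pos (by linarith [hΦ₀ x]) (exp_pos _)).ne')).1 (hint.1.congr (ae_of_all _ fun x => ?_))
  simp only [smul_eq_mul, mul_assoc, exp_sub_mul_rpow_eq_exp_mul_regularizedPrior]

lemma integrable_regularizedPrior_mul_exp (hq : ∀ x, 0 ≤ q x) (hΦ : Continuous Φ)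
    (hΦ₀ : ∀ x, 0 ≤ Φ x) (hb : 0 ≤ b)
    (hint : Integrable (fun x => (1 + Φ x) * exp (c * Φ x - ‖x - proj x‖ ^ 2 / (2 * lam)) *
      q x ^ α) μ) :
    Integrable (fun x => regularizedPrior q α lam proj x *
      (exp ((Φ x + b) * c) * (1 + (Φ x + b)))) μ := by
  set w := regularizedPrior q α lam proj
  have hw : ∀ x, 0 ≤ w x := fun x => mul_nonneg (rpow_nonneg (hq x) α) (exp_pos _).le
  refine (hint.const_mul (exp (b * c) * (1 + b))).mono'
    ((aestronglyMeasurable_regularizedPrior hΦ hΦ₀ hint).mul (by fun_prop : Continuous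
      fun x => exp ((Φ x + b) * c) * (1 + (Φ x + b))).aestronglyMeasurable)
    (ae_of_all _ fun x => ?_)
  have h₁ : 1 + (Φ x + b) ≤ (1 + b) * (1 + Φ x) := by nlinarith [hΦ₀ x]
  rw [norm_of_nonneg (mul_nonneg (hw x) (mul_nonneg (exp_pos _).le (by linarith [hΦ₀ x]))),
    mul_assoc (1 + Φ x), exp_sub_mul_rpow_eq_exp_mul_regularizedPrior]
  calc w x * (exp ((Φ x + b) * c) * (1 + (Φ x + b)))
      = w x * (exp (b * c) * exp (c * Φ x)) * (1 + (Φ x + b)) := by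
        rw [← exp_add]; ring_nf
    _ ≤ w x * (exp (b * c) * exp (c * Φ x)) * ((1 + b) * (1 + Φ x)) :=
        mul_le_mul_of_nonneg_left h₁ (mul_nonneg (hw x) (by positivity))
    _ = _ := by ring

end RegularizedPrior

theorem stmt12_general {d m : ℕ}
    (p : EuclideanSpace ℝ (Fin m) → EuclideanSpace ℝ (Fin d) → ℝ)
    (q : EuclideanSpace ℝ (Fin d) → ℝ)
    (α lam : ℝ)
    (proj : EuclideanSpace ℝ (Fin d) → EuclideanSpace ℝ (Fin d))
    (hq_pos : ∀ x, 0 < q x)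
    (hp_pos : ∀ y x, 0 < p y x) (hp_bdd : ∀ y, ∃ M : ℝ, ∀ x, p y x ≤ M)
    (hp_smooth : ∀ y, ContDiff ℝ 1 (p y))
    (Φ₁ : EuclideanSpace ℝ (Fin d) → ℝ) (Φ₂ : EuclideanSpace ℝ (Fin m) → ℝ)
    (hΦ₁cont : Continuous Φ₁) (hΦ₁nonneg : ∀ x, 0 ≤ Φ₁ x)
    (hΦ₂cont : Continuous Φ₂) (hΦ₂nonneg : ∀ y, 0 ≤ Φ₂ y)
    (hloglip : ∀ x y₁ y₂, |Real.log (p y₁ x) - Real.log (p y₂ x)| ≤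
      (Φ₁ x + Φ₂ y₁ + Φ₂ y₂) * ‖y₁ - y₂‖)
    (hint : ∀ c₀ : ℝ, 0 < c₀ → Integrable (fun x : EuclideanSpace ℝ (Fin d) =>
      (1 + Φ₁ x) * Real.exp (c₀ * Φ₁ x - ‖x - proj x‖ ^ 2 / (2 * lam)) * q x ^ α)) :
    ∀ K : Set (EuclideanSpace ℝ (Fin m)), IsCompact K →
      ∃ MK : ℝ, 0 ≤ MK ∧ ∀ y₁ ∈ K, ∀ y₂ ∈ K,
        (∫ x : EuclideanSpace ℝ (Fin d),
          |p y₁ x * q x ^ α * Real.exp (-‖x - proj x‖ ^ 2 / (2 * lam)) /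
              (∫ x' : EuclideanSpace ℝ (Fin d),
                p y₁ x' * q x' ^ α * Real.exp (-‖x' - proj x'‖ ^ 2 / (2 * lam))) -
            p y₂ x * q x ^ α * Real.exp (-‖x - proj x‖ ^ 2 / (2 * lam)) /
              (∫ x' : EuclideanSpace ℝ (Fin d),
                p y₂ x' * q x' ^ α * Real.exp (-‖x' - proj x'‖ ^ 2 / (2 * lam)))|) ≤
          MK * ‖y₁ - y₂‖ := by
  intro K hK
  rcases K.eq_empty_or_nonempty with rfl | ⟨y₀, hy₀⟩
  · exact ⟨0, le_rfl, fun y₁ h₁ => absurd h₁ (Set.notMem_empty _)⟩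
  obtain ⟨B, hB⟩ := hK.bddAbove_image hΦ₂cont.continuousOn
  have hΦ₂B : ∀ y ∈ K, Φ₂ y ≤ B := fun y hy => hB (Set.mem_image_of_mem _ hy)
  have hB₀ : 0 ≤ B := (hΦ₂nonneg y₀).trans (hΦ₂B y₀ hy₀)
  obtain ⟨D, hD⟩ := Metric.isBounded_iff.1 hK.isBounded
  have hD₁ : 0 < max D 1 := lt_max_of_lt_right one_pos
  have hint_D := hint _ hD₁
  obtain ⟨M₀, hM₀⟩ := hp_bdd y₀
  set w := regularizedPrior q α lam proj
  have hw := regularizedPrior_pos (α := α) (lam := lam) (proj := proj) hq_pos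
  have hlog : ∀ y₁ ∈ K, ∀ y₂ ∈ K, ∀ x, |log (p y₁ x * w x) - log (p y₂ x * w x)| ≤
      (Φ₁ x + 2 * B) * dist y₁ y₂ := fun y₁ h₁ y₂ h₂ x => by
    rw [log_mul (hp_pos y₁ x).ne' (hw x).ne', log_mul (hp_pos y₂ x).ne' (hw x).ne',
      add_sub_add_right_eq_sub, dist_eq_norm]
    refine (hloglip x y₁ y₂).trans (mul_le_mul_of_nonneg_right ?_ (norm_nonneg _))
    linarith [hΦ₂B y₁ h₁, hΦ₂B y₂ h₂]
  obtain ⟨M, hM, hM_lip⟩ := exists_integral_abs_div_integral_sub_le_mul_dist (μ := volume)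
    (g := fun y x => p y x * w x) (D := max D 1) hy₀ (fun y _ x => mul_pos (hp_pos y x) (hw x))
    (fun x => by linarith [hΦ₁nonneg x]) hlog
    (fun y₁ h₁ y₂ h₂ => (hD h₁ h₂).trans (le_max_left _ _))
    (fun y _ => (hp_smooth y).continuous.aestronglyMeasurable.mul
      (aestronglyMeasurable_regularizedPrior hΦ₁cont hΦ₁nonneg hint_D))
    (by fun_prop)
    (((integrable_regularizedPrior_mul_exp (fun x => (hq_pos x).le) hΦ₁cont hΦ₁nonneg
      (mul_nonneg zero_le_two hB₀) hint_D).bdd_mul (hp_smooth y₀).continuous.aestronglyMeasurable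
      (ae_of_all _ fun x => by rw [norm_of_nonneg (hp_pos y₀ x).le]; exact hM₀ x)).congr
      (ae_of_all _ fun x => by simp only [w, mul_assoc]))
  exact ⟨M, hM, fun y₁ h₁ y₂ h₂ => by
    simpa only [w, regularizedPrior, dist_eq_norm, mul_assoc] using hM_lip y₁ h₁ y₂ h₂⟩

/-- local Lipschitz continuity in `y`, in total variation (expressed as the
`L¹` distance of the Lebesgue densities), of the posterior
`π_{λ,y}(dx) ∝ p(y|x) q_θ(x)^α exp(-ι_C^{(λ)}(x)) dx`. -/
theorem stmt12 {d m : ℕ}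
    (p : EuclideanSpace ℝ (Fin m) → EuclideanSpace ℝ (Fin d) → ℝ)
    (q : EuclideanSpace ℝ (Fin d) → ℝ)
    (α lam : ℝ) (hα : 0 < α) (hlam : 0 < lam)
    (C : Set (EuclideanSpace ℝ (Fin d)))
    (hconv : Convex ℝ C) (hcomp : IsCompact C) (hne : C.Nonempty)
    (proj : EuclideanSpace ℝ (Fin d) → EuclideanSpace ℝ (Fin d))
    (hproj : ∀ x, proj x ∈ C ∧ ∀ z ∈ C, ‖x - proj x‖ ≤ ‖x - z‖)
    (hq_pos : ∀ x, 0 < q x) (hq_bdd : ∃ M : ℝ, ∀ x, q x ≤ M) (hq_cont : Continuous q)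
    (hp_pos : ∀ y x, 0 < p y x) (hp_bdd : ∀ y, ∃ M : ℝ, ∀ x, p y x ≤ M)
    (hp_smooth : ∀ y, ContDiff ℝ 1 (p y))
    (Φ₁ : EuclideanSpace ℝ (Fin d) → ℝ) (Φ₂ : EuclideanSpace ℝ (Fin m) → ℝ)
    (hΦ₁cont : Continuous Φ₁) (hΦ₁nonneg : ∀ x, 0 ≤ Φ₁ x)
    (hΦ₂cont : Continuous Φ₂) (hΦ₂nonneg : ∀ y, 0 ≤ Φ₂ y)
    (hloglip : ∀ x y₁ y₂, |Real.log (p y₁ x) - Real.log (p y₂ x)| ≤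
      (Φ₁ x + Φ₂ y₁ + Φ₂ y₂) * ‖y₁ - y₂‖)
    (hint : ∀ c₀ : ℝ, 0 < c₀ → Integrable (fun x : EuclideanSpace ℝ (Fin d) =>
      (1 + Φ₁ x) * Real.exp (c₀ * Φ₁ x - ‖x - proj x‖ ^ 2 / (2 * lam)) * q x ^ α)) :
    ∀ K : Set (EuclideanSpace ℝ (Fin m)), IsCompact K →
      ∃ MK : ℝ, 0 ≤ MK ∧ ∀ y₁ ∈ K, ∀ y₂ ∈ K,
        (∫ x : EuclideanSpace ℝ (Fin d),
          |p y₁ x * q x ^ α * Real.exp (-‖x - proj x‖ ^ 2 / (2 * lam)) /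
              (∫ x' : EuclideanSpace ℝ (Fin d),
                p y₁ x' * q x' ^ α * Real.exp (-‖x' - proj x'‖ ^ 2 / (2 * lam))) -
            p y₂ x * q x ^ α * Real.exp (-‖x - proj x‖ ^ 2 / (2 * lam)) /
              (∫ x' : EuclideanSpace ℝ (Fin d),
                p y₂ x' * q x' ^ α * Real.exp (-‖x' - proj x'‖ ^ 2 / (2 * lam)))|) ≤
          MK * ‖y₁ - y₂‖ :=
  stmt12_general p q α lam proj hq_pos hp_pos hp_bdd hp_smooth Φ₁ Φ₂ hΦ₁cont hΦ₁nonneg hΦ₂cont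
    hΦ₂nonneg hloglip hint
end
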